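/- arXiv:2508.17463 — 5 statements merged into one kernel-verified Lean document; each statement's English description precedes it below -/
import Mathlib

section
/- Let ℓ be an odd prime, n ≥ 1, and let A be a 2×2 matrix over ℤ/ℓ^{n+2}ℤ of the form [[1 + ℓ^n·a, ℓ^{n+1}·j], [ℓ^n·b, 1 + ℓ^{n+1}·k]] for integers a, b, j, k. Then for every positive integer w, A^w = [[1 + w·ℓ^n·a + C(w,2)·ℓ^{2n}·a², w·ℓ^{n+1}·j], [w·ℓ^n·b + C(w,2)·ℓ^{2n}·a·b, 1 + w·ℓ^{n+1}·k]] in M₂(ℤ/ℓ^{n+2}ℤ). -/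
theorem stmt_0 (ℓ n : ℕ) (hℓ : ℓ.Prime) (hodd : Odd ℓ) (hn : 1 ≤ n)
    (a b j k : ℤ)
    (A : Matrix (Fin 2) (Fin 2) (ZMod (ℓ ^ (n + 2))))
    (hA : A = (!![1 + (ℓ : ℤ) ^ n * a, (ℓ : ℤ) ^ (n + 1) * j;
                  (ℓ : ℤ) ^ n * b, 1 + (ℓ : ℤ) ^ (n + 1) * k]).map
        (Int.cast : ℤ → ZMod (ℓ ^ (n + 2)))) :
    ∀ w : ℕ, 1 ≤ w →
      A ^ w = (!![1 + (w : ℤ) * (ℓ : ℤ) ^ n * a + (w.choose 2 : ℤ) * (ℓ : ℤ) ^ (2 * n) * a ^ 2,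
                  (w : ℤ) * (ℓ : ℤ) ^ (n + 1) * j;
                  (w : ℤ) * (ℓ : ℤ) ^ n * b + (w.choose 2 : ℤ) * (ℓ : ℤ) ^ (2 * n) * a * b,
                  1 + (w : ℤ) * (ℓ : ℤ) ^ (n + 1) * k]).map
        (Int.cast : ℤ → ZMod (ℓ ^ (n + 2))) := by
  set c : ZMod (ℓ ^ (n + 2)) := (ℓ : ZMod (ℓ ^ (n + 2))) with hc
  have h0 : c ^ (n + 2) = 0 := by
    rw [hc, ← Nat.cast_pow, ZMod.natCast_self]
  have hzero : ∀ m : ℕ, n + 2 ≤ m → c ^ m = 0 := by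
    intro m hm
    obtain ⟨d, hd⟩ := Nat.exists_eq_add_of_le hm
    rw [hd, pow_add c (n + 2) d, h0, zero_mul]
  have h2n1 : c ^ n * c ^ n * c = 0 := by
    have := hzero (n + n + 1) (by omega)
    rw [pow_succ c (n + n), pow_add c n n] at this
    exact this
  have h3n : c ^ n * c ^ n * c ^ n = 0 := by
    have := hzero (n + n + n) (by omega)
    rw [pow_add c (n + n) n, pow_add c n n] at this
    exact this
  have h2n2 : c ^ n * c ^ n * c * c = 0 := by
    rw [h2n1, zero_mul]
  have hq : (c : ZMod (ℓ ^ (n + 2))) ^ (2 * n) = c ^ n * c ^ n := by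
    rw [two_mul, pow_add c n n]
  have hq1 : (c : ZMod (ℓ ^ (n + 2))) ^ (n + 1) = c ^ n * c := pow_succ c n
  intro w hw
  induction w with
  | zero => omega
  | succ w ih =>
    rcases Nat.eq_zero_or_pos w with h | h
    · subst h
      rw [pow_one, hA]
      ext i j'
      fin_cases i <;> fin_cases j' <;>
        simp [Matrix.map_apply] <;> push_cast <;> ring
    · have IH := ih h
      have hch : (w + 1).choose 2 = w + w.choose 2 := by
        rw [Nat.choose_succ_succ, Nat.choose_one_right]
      rw [pow_succ A w, IH, hA, hch]
      ext i j'
      fin_cases i <;> fin_cases j' <;>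
        simp [Matrix.mul_apply, Fin.sum_univ_two] <;>
        push_cast <;>
        rw [hq, hq1]
      · linear_combination ((w.choose 2 : ZMod (ℓ ^ (n + 2))) * a ^ 3) * h3n +
          ((w : ZMod (ℓ ^ (n + 2))) * j * b) * h2n1
      · linear_combination ((w : ZMod (ℓ ^ (n + 2))) * a * j) * h2n1 +
          ((w.choose 2 : ZMod (ℓ ^ (n + 2))) * a ^ 2 * j * c) * h3n +
          ((w : ZMod (ℓ ^ (n + 2))) * j * k) * h2n2
      · linear_combination ((w.choose 2 : ZMod (ℓ ^ (n + 2))) * a ^ 2 * b) * h3n +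
          ((w : ZMod (ℓ ^ (n + 2))) * k * b) * h2n1
      · linear_combination ((w : ZMod (ℓ ^ (n + 2))) * j * b) * h2n1 +
          ((w.choose 2 : ZMod (ℓ ^ (n + 2))) * a * b * j * c) * h3n +
          ((w : ZMod (ℓ ^ (n + 2))) * k ^ 2) * h2n2
end

section
/- Let ℓ be an odd prime and n ≥ 1. If A is a 2×2 matrix over ℤ/ℓ^{n+2}ℤ of the form [[1 + ℓ^n·a, ℓ^{n+1}·j], [ℓ^n·b, 1 + ℓ^{n+1}·k]], then A^ℓ = [[1 + ℓ^{n+1}·a, 0], [ℓ^{n+1}·b, 1]] in M₂(ℤ/ℓ^{n+2}ℤ). -/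
theorem stmt_1 (ℓ n : ℕ) (hℓ : ℓ.Prime) (hodd : Odd ℓ) (hn : 1 ≤ n)
    (a b j k : ℤ)
    (A : Matrix (Fin 2) (Fin 2) (ZMod (ℓ ^ (n + 2))))
    (hA : A = (!![1 + (ℓ : ℤ) ^ n * a, (ℓ : ℤ) ^ (n + 1) * j;
                  (ℓ : ℤ) ^ n * b, 1 + (ℓ : ℤ) ^ (n + 1) * k]).map
        (Int.cast : ℤ → ZMod (ℓ ^ (n + 2)))) :
    A ^ ℓ = (!![1 + (ℓ : ℤ) ^ (n + 1) * a, 0;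
                (ℓ : ℤ) ^ (n + 1) * b, 1]).map
        (Int.cast : ℤ → ZMod (ℓ ^ (n + 2))) := by
  have h3 : 3 ≤ ℓ := by
    rcases hℓ.two_le.lt_or_eq with h | h
    · omega
    · exfalso; rw [← h] at hodd; exact (Nat.not_odd_iff_even.mpr (by norm_num)) hodd
  have hp0 : ((ℓ : ZMod (ℓ ^ (n + 2)))) ^ (n + 2) = 0 := by
    have : ((ℓ ^ (n + 2) : ℕ) : ZMod (ℓ ^ (n + 2))) = 0 := ZMod.natCast_self _
    push_cast at this; exact this
  have hcast : ∀ m : ℕ, ℓ ^ (n + 2) ∣ m → ((m : ℕ) : ZMod (ℓ ^ (n + 2))) = 0 := by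
    intro m hm
    obtain ⟨c, rfl⟩ := hm
    push_cast
    rw [hp0, zero_mul]
  set C : Matrix (Fin 2) (Fin 2) (ZMod (ℓ ^ (n + 2))) :=
    (!![a, (ℓ : ℤ) * j; b, (ℓ : ℤ) * k]).map (Int.cast : ℤ → ZMod (ℓ ^ (n + 2))) with hC
  set x : Matrix (Fin 2) (Fin 2) (ZMod (ℓ ^ (n + 2))) :=
    ((ℓ : ZMod (ℓ ^ (n + 2))) ^ n) • C with hx
  have hA' : A = x + 1 := by
    rw [hA]
    ext i j'
    fin_cases i <;> fin_cases j' <;>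
      simp [hx, hC, Matrix.one_apply] <;> push_cast <;> ring
  have hxm : ∀ m : ℕ, x ^ m = ((ℓ : ZMod (ℓ ^ (n + 2))) ^ (n * m)) • C ^ m := by
    intro m
    rw [hx, smul_pow, ← pow_mul]
  have hkey : ∀ m, 2 ≤ m →
      ((ℓ : ZMod (ℓ ^ (n + 2))) ^ (n * m)) * ((ℓ.choose m : ℕ) : ZMod (ℓ ^ (n + 2))) = 0 := by
    intro m hm2
    rcases Nat.lt_or_ge m 3 with h | h
    · have hm : m = 2 := by omega
      subst hm
      have hd : ℓ ^ (n + 2) ∣ ℓ ^ (n * 2) * ℓ.choose 2 := by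
        have h1 : ℓ ∣ ℓ.choose 2 := hℓ.dvd_choose_self (by norm_num) (by omega)
        calc ℓ ^ (n + 2) ∣ ℓ ^ (n * 2) * ℓ := by
              rw [← pow_succ]; exact pow_dvd_pow ℓ (by omega)
          _ ∣ ℓ ^ (n * 2) * ℓ.choose 2 := mul_dvd_mul_left _ h1
      have := hcast _ hd
      push_cast at this
      exact this
    · have hd : ℓ ^ (n + 2) ∣ ℓ ^ (n * m) := pow_dvd_pow ℓ (by nlinarith)
      have h0 : ((ℓ : ZMod (ℓ ^ (n + 2))) ^ (n * m)) = 0 := by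
        have := hcast _ hd; push_cast at this; exact this
      rw [h0, zero_mul]
  have hterm : ∀ m ∈ Finset.range (ℓ + 1), m ∉ Finset.range 2 →
      x ^ m * 1 ^ (ℓ - m) * ((ℓ.choose m : ℕ) : Matrix (Fin 2) (Fin 2) (ZMod (ℓ ^ (n + 2)))) = 0 := by
    intro m _ hm
    simp only [Finset.mem_range, not_lt] at hm
    rw [one_pow, mul_one, hxm m, smul_mul_assoc, (Nat.cast_commute (ℓ.choose m) (C ^ m)).eq.symm,
      ← nsmul_eq_mul, ← Nat.cast_smul_eq_nsmul (ZMod (ℓ ^ (n + 2))), smul_smul, hkey m hm, zero_smul]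
  have hbin : A ^ ℓ = 1 + (ℓ : ZMod (ℓ ^ (n + 2))) • x := by
    rw [hA', (Commute.one_right x).add_pow]
    rw [← Finset.sum_subset (Finset.range_subset_range.mpr (by omega : 2 ≤ ℓ + 1)) hterm]
    rw [Finset.sum_range_succ, Finset.sum_range_one]
    simp [Nat.choose_one_right]
    rw [← (Nat.cast_commute ℓ x).eq, ← nsmul_eq_mul, ← Nat.cast_smul_eq_nsmul (ZMod (ℓ ^ (n + 2)))]
  rw [hbin]
  ext i j'
  have hl1 : (ℓ : ZMod (ℓ ^ (n + 2))) * ((ℓ : ZMod (ℓ ^ (n + 2))) ^ n * ((ℓ : ZMod (ℓ ^ (n + 2))) * (j : ZMod (ℓ ^ (n + 2))))) = 0 := by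
    rw [show (ℓ : ZMod (ℓ ^ (n + 2))) * ((ℓ : ZMod (ℓ ^ (n + 2))) ^ n * ((ℓ : ZMod (ℓ ^ (n + 2))) * (j : ZMod (ℓ ^ (n + 2))))) = (ℓ : ZMod (ℓ ^ (n + 2))) ^ (n + 2) * j from by ring, hp0, zero_mul]
  have hl2 : (ℓ : ZMod (ℓ ^ (n + 2))) * ((ℓ : ZMod (ℓ ^ (n + 2))) ^ n * ((ℓ : ZMod (ℓ ^ (n + 2))) * (k : ZMod (ℓ ^ (n + 2))))) = 0 := by
    rw [show (ℓ : ZMod (ℓ ^ (n + 2))) * ((ℓ : ZMod (ℓ ^ (n + 2))) ^ n * ((ℓ : ZMod (ℓ ^ (n + 2))) * (k : ZMod (ℓ ^ (n + 2))))) = (ℓ : ZMod (ℓ ^ (n + 2))) ^ (n + 2) * k from by ring, hp0, zero_mul]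
  fin_cases i <;> fin_cases j' <;>
    simp [hx, hC, Matrix.one_apply] <;> push_cast <;>
    first
      | (rw [hl1])
      | (rw [hl2])
      | ring
end

section
/- Let ℓ be an odd prime and n ≥ 1. Suppose A and B are 2×2 matrices over ℤ/ℓ^{n+2}ℤ of the forms [[1 + ℓ^n·a, ℓ^{n+1}·j], [ℓ^n·b, 1 + ℓ^{n+1}·k]] and [[1 + ℓ^n·x, ℓ^{n+1}·z], [ℓ^n·y, 1 + ℓ^{n+1}·w]] respectively. If (B^ℓ)^{-1}·A^ℓ is upper triangular with upper-left entry 1 (i.e., of the form [[1, c], [0, d]]), then a ≡ x (mod ℓ) and b ≡ y (mod ℓ). -/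
/-!
Write `A = 1 + ℓ ^ n * N`. In the binomial expansion of `A ^ ℓ` the terms of degree `m ≥ 2` carry
`ℓ.choose m * ℓ ^ (n * m)`, which vanishes modulo `ℓ ^ (n + 2)` (for `m = ℓ` this is where `ℓ ≥ 3`
is needed), so `A ^ ℓ = 1 + ℓ ^ (n + 1) * N = !![1 + ℓ ^ (n + 1) * a, 0; ℓ ^ (n + 1) * b, 1]`, and likewise
for `B`. Right multiplication by `!![1, c; 0, d]` does not change the first column, so
`A ^ ℓ = B ^ ℓ * !![1, c; 0, d]` gives `ℓ ^ (n + 1) * a = ℓ ^ (n + 1) * x` and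
`ℓ ^ (n + 1) * b = ℓ ^ (n + 1) * y` modulo `ℓ ^ (n + 2)`.
-/

theorem Nat.Prime.pow_add_two_dvd_pow_mul_choose {p n m : ℕ} (hp : p.Prime) (hp3 : 3 ≤ p)
    (hn : 1 ≤ n) (hm2 : 2 ≤ m) (hmp : m ≤ p) : p ^ (n + 2) ∣ p ^ (n * m) * p.choose m := by
  rcases hmp.eq_or_lt with heq | hlt
  · rw [heq, Nat.choose_self, mul_one]
    exact Nat.pow_dvd_pow p (by nlinarith)
  · rw [pow_succ]
    exact mul_dvd_mul (Nat.pow_dvd_pow p (by nlinarith)) (hp.dvd_choose_self (by omega) hlt)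

theorem one_add_pow_mul_pow_prime {R : Type*} [Ring R] {p n : ℕ} (hp : p.Prime) (hp3 : 3 ≤ p)
    (hn : 1 ≤ n) (hR : (p : R) ^ (n + 2) = 0) (x : R) :
    (1 + (p : R) ^ n * x) ^ p = 1 + (p : R) ^ (n + 1) * x := by
  have hterm : ∀ m, 2 ≤ m → m ≤ p → ((p : R) ^ n * x) ^ m * p.choose m = 0 := by
    intro m hm2 hmp
    obtain ⟨c, hc⟩ := hp.pow_add_two_dvd_pow_mul_choose hp3 hn hm2 hmp
    rw [((Nat.cast_commute p x).pow_left n).mul_pow, ← pow_mul, mul_assoc,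
      ← (Nat.cast_commute _ _).eq, ← mul_assoc, ← Nat.cast_pow, ← Nat.cast_mul, hc,
      Nat.cast_mul, Nat.cast_pow, hR, zero_mul, zero_mul]
  rw [add_comm 1, (Commute.one_right _).add_pow, Finset.sum_eq_add 0 1 zero_ne_one]
  · simp only [pow_zero, one_pow, Nat.choose_zero_right, Nat.choose_one_right, Nat.cast_one,
      mul_one, pow_one]
    rw [mul_assoc, ← (Nat.cast_commute p x).eq, ← mul_assoc, ← pow_succ, add_comm]
  · intro m hm ⟨hm0, hm1⟩
    rw [one_pow, mul_one]
    exact hterm m (by omega) (by simpa [Nat.lt_succ_iff] using hm)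
  · simp
  · simp [hp.ne_zero]

theorem ZMod.natCast_pow_mul_intCast_eq_iff_modEq {p k : ℕ} (hp : p ≠ 0) {u v : ℤ} :
    (p : ZMod (p ^ (k + 1))) ^ k * u = (p : ZMod (p ^ (k + 1))) ^ k * v ↔ u ≡ v [ZMOD p] := by
  rw [← Int.cast_natCast, ← Int.cast_pow, ← Int.cast_mul, ← Int.cast_mul,
    ZMod.intCast_eq_intCast_iff, Nat.cast_pow, pow_succ,
    Int.ModEq.mul_left_cancel_iff' (pow_ne_zero _ (Int.natCast_ne_zero.2 hp))]

theorem Matrix.fin_two_pow_prime {R : Type*} [CommRing R] {p n : ℕ} (hp : p.Prime) (hp3 : 3 ≤ p)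
    (hn : 1 ≤ n) (hR : (p : R) ^ (n + 2) = 0) (a b j k : R) :
    !![1 + p ^ n * a, p ^ (n + 1) * j; p ^ n * b, 1 + p ^ (n + 1) * k] ^ p =
      !![1 + p ^ (n + 1) * a, 0; p ^ (n + 1) * b, 1] := by
  have hshape (m : ℕ) : !![1 + p ^ m * a, p ^ (m + 1) * j; p ^ m * b, 1 + p ^ (m + 1) * k] =
      1 + (p : Matrix (Fin 2) (Fin 2) R) ^ m * !![a, p * j; b, p * k] := by
    rw [← Nat.cast_pow (α := Matrix (Fin 2) (Fin 2) R), ← nsmul_eq_mul]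
    ext i i'
    fin_cases i <;> fin_cases i' <;> simp <;> ring
  have hRmat : (p : Matrix (Fin 2) (Fin 2) R) ^ (n + 2) = 0 := by
    rw [← map_natCast (Matrix.scalar (Fin 2)), ← map_pow, hR, map_zero]
  rw [hshape, one_add_pow_mul_pow_prime hp hp3 hn hRmat, ← hshape, hR]
  simp

theorem Matrix.map_fin_two {α β : Type*} (f : α → β) (a b c d : α) :
    (!![a, b; c, d]).map f = !![f a, f b; f c, f d] :=
  Matrix.eta_fin_two _

theorem stmt_2_general (ℓ n : ℕ) (hℓ : ℓ.Prime) (hodd : Odd ℓ) (hn : 1 ≤ n)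
    (a b j k x y z w : ℤ)
    (A B : Matrix (Fin 2) (Fin 2) (ZMod (ℓ ^ (n + 2))))
    (hA : A = (!![1 + (ℓ : ℤ) ^ n * a, (ℓ : ℤ) ^ (n + 1) * j;
                  (ℓ : ℤ) ^ n * b, 1 + (ℓ : ℤ) ^ (n + 1) * k]).map
        (Int.cast : ℤ → ZMod (ℓ ^ (n + 2))))
    (hB : B = (!![1 + (ℓ : ℤ) ^ n * x, (ℓ : ℤ) ^ (n + 1) * z;
                  (ℓ : ℤ) ^ n * y, 1 + (ℓ : ℤ) ^ (n + 1) * w]).map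
        (Int.cast : ℤ → ZMod (ℓ ^ (n + 2))))
    (hBu : IsUnit B.det)
    (hup : ∃ c d : ZMod (ℓ ^ (n + 2)), (B ^ ℓ)⁻¹ * A ^ ℓ = !![1, c; 0, d]) :
    a ≡ x [ZMOD (ℓ : ℤ)] ∧ b ≡ y [ZMOD (ℓ : ℤ)] := by
  have hℓ3 : 3 ≤ ℓ := by
    obtain ⟨t, rfl⟩ := hodd
    have := hℓ.two_le
    omega
  have hℓR : (ℓ : ZMod (ℓ ^ (n + 2))) ^ (n + 2) = 0 := by
    rw [← Nat.cast_pow, ZMod.natCast_self]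
  obtain ⟨c, d, hcd⟩ := hup
  have hBℓu : IsUnit (B ^ ℓ).det := by simpa only [Matrix.det_pow] using hBu.pow ℓ
  have hcol : A ^ ℓ = B ^ ℓ * !![1, c; 0, d] := by
    rw [← hcd, ← mul_assoc, Matrix.mul_nonsing_inv _ hBℓu, one_mul]
  rw [hA, hB, Matrix.map_fin_two, Matrix.map_fin_two] at hcol
  push_cast at hcol
  rw [Matrix.fin_two_pow_prime hℓ hℓ3 hn hℓR, Matrix.fin_two_pow_prime hℓ hℓ3 hn hℓR,
    Matrix.mul_fin_two] at hcol
  have ha := congr_fun₂ hcol 0 0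
  have hb := congr_fun₂ hcol 1 0
  simp only [Matrix.of_apply, Matrix.cons_val', Matrix.cons_val_zero, Matrix.cons_val_one,
    Matrix.empty_val', Matrix.cons_val_fin_one, mul_one, mul_zero, add_zero, add_right_inj] at ha hb
  exact ⟨(ZMod.natCast_pow_mul_intCast_eq_iff_modEq hℓ.ne_zero).1 ha,
    (ZMod.natCast_pow_mul_intCast_eq_iff_modEq hℓ.ne_zero).1 hb⟩

theorem stmt_2 (ℓ n : ℕ) (hℓ : ℓ.Prime) (hodd : Odd ℓ) (hn : 1 ≤ n)
    (a b j k x y z w : ℤ)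
    (A B : Matrix (Fin 2) (Fin 2) (ZMod (ℓ ^ (n + 2))))
    (hA : A = (!![1 + (ℓ : ℤ) ^ n * a, (ℓ : ℤ) ^ (n + 1) * j;
                  (ℓ : ℤ) ^ n * b, 1 + (ℓ : ℤ) ^ (n + 1) * k]).map
        (Int.cast : ℤ → ZMod (ℓ ^ (n + 2))))
    (hB : B = (!![1 + (ℓ : ℤ) ^ n * x, (ℓ : ℤ) ^ (n + 1) * z;
                  (ℓ : ℤ) ^ n * y, 1 + (ℓ : ℤ) ^ (n + 1) * w]).map
        (Int.cast : ℤ → ZMod (ℓ ^ (n + 2))))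
    (hAu : IsUnit A.det) (hBu : IsUnit B.det)
    (hup : ∃ c d : ZMod (ℓ ^ (n + 2)), (B ^ ℓ)⁻¹ * A ^ ℓ = !![1, c; 0, d]) :
    a ≡ x [ZMOD (ℓ : ℤ)] ∧ b ≡ y [ZMOD (ℓ : ℤ)] :=
  stmt_2_general ℓ n hℓ hodd hn a b j k x y z w A B hA hB hBu hup
end

section
/- Let ℓ be an odd prime and n ≥ 1. The ℓ-power map A ↦ A^ℓ, restricted to matrices in GL₂(ℤ_ℓ) whose reduction mod ℓ^{n+1} has the form [[1 + ℓ^n·a, 0], [ℓ^n·b, 1]], induces an injective map from the set of such reductions mod ℓ^{n+1} to the set of matrices mod ℓ^{n+2} of the form [[1 + ℓ^{n+1}·a, 0], [ℓ^{n+1}·b, 1]]: if A and B both reduce mod ℓ^{n+2} to matrices of the form [[1 + ℓ^n·*, ℓ^{n+1}·*], [ℓ^n·*, 1 + ℓ^{n+1}·*]] and A^ℓ ≡ B^ℓ (mod ℓ^{n+2}), then A ≡ B (mod ℓ^{n+1}). -/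
/-!
Write `A ≡ 1 + ℓⁿ C` and `B ≡ 1 + ℓⁿ D` modulo `ℓⁿ⁺²`. In the binomial expansion of
`(1 + ℓⁿ C)^ℓ` the term of degree `m ≥ 2` carries the factor `ℓ^(nm) * choose ℓ m`, which is
divisible by `ℓⁿ⁺²` (for `m = 2` because `ℓ ∣ choose ℓ 2`, as `ℓ` is odd). Hence
`A^ℓ ≡ 1 + ℓⁿ⁺¹ C`, so `A^ℓ ≡ B^ℓ` gives `ℓ • (ℓⁿ C) ≡ ℓ • (ℓⁿ D)` modulo `ℓⁿ⁺²`, that is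
`ℓⁿ C ≡ ℓⁿ D` and therefore `A ≡ B` modulo `ℓⁿ⁺¹`.
-/

lemma Nat.Prime.pow_dvd_pow_mul_choose {ℓ n m : ℕ} (hℓ : ℓ.Prime) (hℓ2 : 2 < ℓ) (hn : 1 ≤ n)
    (hm : 2 ≤ m) : ℓ ^ (n + 2) ∣ ℓ ^ (n * m) * ℓ.choose m := by
  rcases hm.eq_or_lt with rfl | hm3
  · rw [pow_succ]
    exact mul_dvd_mul (pow_dvd_pow ℓ (by omega)) (hℓ.dvd_choose_self two_ne_zero hℓ2)
  · exact dvd_mul_of_dvd_left (pow_dvd_pow ℓ (by nlinarith)) _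

open Finset in
lemma Nat.Prime.one_add_pow_nsmul_pow {R : Type*} [Semiring R] {ℓ n : ℕ} (hℓ : ℓ.Prime)
    (hℓ2 : 2 < ℓ) (hn : 1 ≤ n) (hR : ((ℓ ^ (n + 2) : ℕ) : R) = 0) (x : R) :
    (1 + ℓ ^ n • x) ^ ℓ = 1 + ℓ ^ (n + 1) • x := by
  have hvanish : ∀ m ∈ range (ℓ - 1),
      (ℓ ^ n • x) ^ (m + 1 + 1) * 1 ^ (ℓ - (m + 1 + 1)) * (ℓ.choose (m + 1 + 1) : R) = 0 := by
    intro m _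
    obtain ⟨c, hc⟩ := hℓ.pow_dvd_pow_mul_choose hℓ2 hn (Nat.le_add_left 2 m)
    rw [one_pow, mul_one, ← nsmul_eq_mul', smul_pow, smul_smul, ← pow_mul, nsmul_eq_mul,
      mul_comm, hc, Nat.cast_mul, hR, zero_mul, zero_mul]
  rw [add_comm 1, (Commute.one_right _).add_pow, show ℓ + 1 = ℓ - 1 + 1 + 1 by omega,
    sum_range_succ', sum_range_succ', sum_eq_zero hvanish]
  simp only [zero_add, pow_zero, pow_one, one_pow, mul_one, Nat.choose_zero_right,
    Nat.choose_one_right, Nat.cast_one]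
  rw [← nsmul_eq_mul', smul_smul, ← pow_succ', add_comm]

lemma ZMod.castHom_eq_of_nsmul_eq {p k : ℕ} (hp : p ≠ 0) {x y : ZMod (p ^ (k + 1))}
    (h : p • x = p • y) :
    ZMod.castHom (pow_dvd_pow p k.le_succ) (ZMod (p ^ k)) x =
      ZMod.castHom (pow_dvd_pow p k.le_succ) (ZMod (p ^ k)) y := by
  obtain ⟨a, rfl⟩ := ZMod.intCast_surjective x
  obtain ⟨b, rfl⟩ := ZMod.intCast_surjective y
  simp only [nsmul_eq_mul, ← Int.cast_natCast (R := ZMod _) p, ← Int.cast_mul,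
    ZMod.intCast_eq_intCast_iff_dvd_sub] at h
  rw [map_intCast, map_intCast, ZMod.intCast_eq_intCast_iff_dvd_sub]
  rw [← mul_sub, Nat.cast_pow, pow_succ'] at h
  exact (mul_dvd_mul_iff_left (Int.natCast_ne_zero.mpr hp)).mp h

lemma Matrix.map_castHom_eq_of_nsmul_eq {ι κ : Type*} {p k : ℕ} (hp : p ≠ 0)
    {M N : Matrix ι κ (ZMod (p ^ (k + 1)))} (h : p • M = p • N) :
    M.map (ZMod.castHom (pow_dvd_pow p k.le_succ) (ZMod (p ^ k))) =
      N.map (ZMod.castHom (pow_dvd_pow p k.le_succ) (ZMod (p ^ k))) := by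
  ext i j
  exact ZMod.castHom_eq_of_nsmul_eq hp (congrFun (congrFun h i) j)

lemma Matrix.map_intCast_eq_one_add_pow_nsmul {R : Type*} [CommRing R] (ℓ n : ℕ)
    (a j b k : ℤ) :
    (!![1 + (ℓ : ℤ) ^ n * a, (ℓ : ℤ) ^ (n + 1) * j;
        (ℓ : ℤ) ^ n * b, 1 + (ℓ : ℤ) ^ (n + 1) * k]).map (Int.cast : ℤ → R) =
      1 + ℓ ^ n • (!![a, ℓ * j; b, ℓ * k]).map (Int.cast : ℤ → R) := by
  ext i i'
  rw [Matrix.add_apply, Matrix.smul_apply]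
  fin_cases i <;> fin_cases i' <;> simp <;> ring

theorem stmt_4 (ℓ n : ℕ) [Fact ℓ.Prime] (hodd : Odd ℓ) (hn : 1 ≤ n)
    (A B : Matrix (Fin 2) (Fin 2) ℤ_[ℓ])
    (hA : ∃ a j b k : ℤ, A.map (PadicInt.toZModPow (n + 2)) =
      (!![1 + (ℓ : ℤ) ^ n * a, (ℓ : ℤ) ^ (n + 1) * j;
          (ℓ : ℤ) ^ n * b, 1 + (ℓ : ℤ) ^ (n + 1) * k]).map
        (Int.cast : ℤ → ZMod (ℓ ^ (n + 2))))
    (hB : ∃ x z y w : ℤ, B.map (PadicInt.toZModPow (n + 2)) =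
      (!![1 + (ℓ : ℤ) ^ n * x, (ℓ : ℤ) ^ (n + 1) * z;
          (ℓ : ℤ) ^ n * y, 1 + (ℓ : ℤ) ^ (n + 1) * w]).map
        (Int.cast : ℤ → ZMod (ℓ ^ (n + 2))))
    (hpow : (A ^ ℓ).map (PadicInt.toZModPow (n + 2)) =
      (B ^ ℓ).map (PadicInt.toZModPow (n + 2))) :
    A.map (PadicInt.toZModPow (n + 1)) = B.map (PadicInt.toZModPow (n + 1)) := by
  obtain ⟨a, j, b, k, hA⟩ := hA
  obtain ⟨x, z, y, w, hB⟩ := hB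
  rw [Matrix.map_intCast_eq_one_add_pow_nsmul] at hA hB
  have hℓ : ℓ.Prime := Fact.out
  have hℓ2 : 2 < ℓ := hℓ.two_le.lt_of_ne (by rintro rfl; exact absurd hodd (by decide))
  have hchar : ((ℓ ^ (n + 2) : ℕ) : Matrix (Fin 2) (Fin 2) (ZMod (ℓ ^ (n + 2)))) = 0 := by simp
  rw [Matrix.map_pow, Matrix.map_pow, hA, hB, hℓ.one_add_pow_nsmul_pow hℓ2 hn hchar,
    hℓ.one_add_pow_nsmul_pow hℓ2 hn hchar] at hpow
  have hcancel := add_left_cancel hpow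
  rw [← PadicInt.zmod_cast_comp_toZModPow _ _ (n + 1).le_succ, RingHom.coe_comp,
    ← Matrix.map_map, ← Matrix.map_map, hA, hB]
  simp only [← RingHom.mapMatrix_apply, map_add, map_one]
  congr 1
  exact Matrix.map_castHom_eq_of_nsmul_eq hℓ.ne_zero (by rwa [smul_smul, smul_smul, ← pow_succ'])
end

section
/- Let ℓ be a prime and G an open subgroup of GL₂(ℤ_ℓ). For m ≥ 1 let i_m denote the index of the image of G in GL₂(ℤ/ℓ^mℤ). If i_{n+1} = i_n for some integer n ≥ 1, with n ≠ 1 if ℓ = 2, then the index [GL₂(ℤ_ℓ) : G] equals i_n. -/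
/-!
Write `Γ(m)` for the kernel of reduction `GL_d(ℤ_p) → GL_d(ℤ/p^m)`. Reduction is surjective,
so the index of the image of `G` modulo `p^m` is `[GL_d(ℤ_p) : G Γ(m)]`, and `i_{n+1} = i_n`
says `Γ(n) ≤ G Γ(n+1)`. By the binomial theorem the `p`-th power map sends `1 + p^m A` to
`1 + p^(m+1) A` modulo `p^(m+2)` as soon as `m + 2 ≤ m p` (that is, `m ≥ 1`, and `m ≥ 2`
if `p = 2`), and on `Γ(m)` it only depends on its argument modulo `p^(m+1)`. Hence
`Γ(m) ≤ G Γ(m+1)` implies `Γ(m+1) ≤ G Γ(m+2)`, so `Γ(n) ≤ G Γ(m)` for all `m ≥ n`.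
As `G` is open it contains some `Γ(m)`, so `Γ(n) ≤ G` and `[GL_d(ℤ_p) : G] = i_n`.
-/

open PadicInt Matrix Filter Topology

theorem Nat.Prime.pow_dvd_choose_mul_pow {p m k : ℕ} (hp : p.Prime) (hmp : m + 2 ≤ m * p)
    (hk : 2 ≤ k) (hkp : k ≤ p) : p ^ (m + 2) ∣ p.choose k * (p ^ m) ^ k := by
  rw [← pow_mul]
  rcases hkp.lt_or_eq with hkp | hkp
  · calc p ^ (m + 2) ∣ p ^ (1 + m * k) := pow_dvd_pow p (by nlinarith)
      _ = p * p ^ (m * k) := by rw [pow_add, pow_one]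
      _ ∣ p.choose k * p ^ (m * k) := mul_dvd_mul_right (hp.dvd_choose_self (by omega) hkp) _
  · rw [hkp, Nat.choose_self, one_mul]
    exact pow_dvd_pow p hmp

theorem exists_one_add_pow_smul_pow_prime_eq {A : Type*} [Semiring A] {p m : ℕ} (hp : p.Prime)
    (hmp : m + 2 ≤ m * p) (x : A) :
    ∃ y : A, (1 + p ^ m • x) ^ p = 1 + p ^ (m + 1) • x + p ^ (m + 2) • y := by
  have hdvd : ∀ k ∈ Finset.Ico 2 (p + 1), p ^ (m + 2) ∣ p.choose k * (p ^ m) ^ k :=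
    fun k hk => hp.pow_dvd_choose_mul_pow hmp (Finset.mem_Ico.1 hk).1
      (Nat.lt_succ_iff.1 (Finset.mem_Ico.1 hk).2)
  choose! q hq using hdvd
  refine ⟨∑ k ∈ Finset.Ico 2 (p + 1), q k • x ^ k, ?_⟩
  have hterm : ∀ k, (p ^ m • x) ^ k * 1 ^ (p - k) * (p.choose k : A) =
      (p.choose k * (p ^ m) ^ k) • x ^ k := by
    intro k
    rw [one_pow, mul_one, smul_pow, smul_mul_assoc, ← nsmul_eq_mul', smul_smul, mul_comm]
  have hp1 := hp.one_lt
  rw [add_comm 1, (Commute.one_right _).add_pow, Finset.range_eq_Ico,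
    Finset.sum_eq_sum_Ico_succ_bot (by omega), Finset.sum_eq_sum_Ico_succ_bot (by omega)]
  have htail : ∑ k ∈ Finset.Ico 2 (p + 1), (p.choose k * (p ^ m) ^ k) • x ^ k =
      p ^ (m + 2) • ∑ k ∈ Finset.Ico 2 (p + 1), q k • x ^ k := by
    rw [Finset.smul_sum]
    exact Finset.sum_congr rfl fun k hk => by rw [hq k hk, mul_smul]
  simp only [hterm, zero_add, htail]
  simp [pow_succ', add_assoc, mul_smul]

section Reduction

variable {p : ℕ} [Fact p.Prime] {ι : Type*} [Fintype ι] [DecidableEq ι]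

theorem mapMatrix_toZModPow_eq_iff {k : ℕ} {M N : Matrix ι ι ℤ_[p]} :
    (toZModPow k).mapMatrix M = (toZModPow k).mapMatrix N ↔ ∃ D, M = N + p ^ k • D := by
  rw [← sub_eq_zero, ← map_sub]
  constructor
  · intro h
    have hdvd (i j : ι) : (p : ℤ_[p]) ^ k ∣ (M - N) i j := by
      rw [← Ideal.mem_span_singleton, ← ker_toZModPow]
      exact congrFun (congrFun h i) j
    choose D hD using hdvd
    refine ⟨Matrix.of D, ?_⟩
    ext i j
    simp [← hD]
  · rintro ⟨D, rfl⟩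
    rw [add_sub_cancel_left, map_nsmul, ← Nat.cast_smul_eq_nsmul (ZMod (p ^ k)),
      ZMod.natCast_self, zero_smul]

theorem mapMatrix_toZModPow_succ_nsmul_eq {k : ℕ} {M N : Matrix ι ι ℤ_[p]}
    (h : (toZModPow k).mapMatrix M = (toZModPow k).mapMatrix N) :
    (toZModPow (k + 1)).mapMatrix (p • M) = (toZModPow (k + 1)).mapMatrix (p • N) := by
  obtain ⟨D, rfl⟩ := mapMatrix_toZModPow_eq_iff.1 h
  exact mapMatrix_toZModPow_eq_iff.2 ⟨D, by rw [smul_add, smul_smul, pow_succ']⟩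

theorem mapMatrix_toZModPow_one_add_pow_prime {m : ℕ} (hmp : m + 2 ≤ m * p)
    (D : Matrix ι ι ℤ_[p]) :
    (toZModPow (m + 2)).mapMatrix ((1 + p ^ m • D) ^ p) =
      (toZModPow (m + 2)).mapMatrix (1 + p ^ (m + 1) • D) := by
  obtain ⟨E, hE⟩ := exists_one_add_pow_smul_pow_prime_eq (Fact.out : p.Prime) hmp D
  exact mapMatrix_toZModPow_eq_iff.2 ⟨E, hE⟩

theorem isUnit_of_isUnit_mapMatrix_toZModPow {m : ℕ} (hm : m ≠ 0) {M : Matrix ι ι ℤ_[p]}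
    (h : IsUnit ((toZModPow m).mapMatrix M)) : IsUnit M := by
  have : Fact (1 < p ^ m) := ⟨Nat.one_lt_pow hm (Fact.out : p.Prime).one_lt⟩
  rw [isUnit_iff_isUnit_det, ← RingHom.map_det] at h
  rw [isUnit_iff_isUnit_det]
  exact isUnit_of_map_unit _ _ h

noncomputable abbrev reduceGL (p : ℕ) [Fact p.Prime] (m : ℕ) :
    GL ι ℤ_[p] →* GL ι (ZMod (p ^ m)) :=
  Units.map (toZModPow m).mapMatrix.toMonoidHom

theorem val_reduceGL (m : ℕ) (x : GL ι ℤ_[p]) :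
    (reduceGL p m x : Matrix ι ι (ZMod (p ^ m))) = (toZModPow m).mapMatrix x :=
  rfl

theorem reduceGL_surjective {m : ℕ} (hm : m ≠ 0) :
    Function.Surjective (reduceGL p m : GL ι ℤ_[p] →* _) := by
  intro U
  obtain ⟨M, hM⟩ : ∃ M, (toZModPow m).mapMatrix M = (U : Matrix ι ι (ZMod (p ^ m))) :=
    ⟨(U : Matrix ι ι (ZMod (p ^ m))).map fun z => (z.val : ℤ_[p]), by ext; simp⟩
  have hunit : IsUnit M := isUnit_of_isUnit_mapMatrix_toZModPow hm (hM ▸ U.isUnit)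
  exact ⟨hunit.unit, Units.ext hM⟩

theorem mem_ker_reduceGL_iff {m : ℕ} {x : GL ι ℤ_[p]} :
    x ∈ (reduceGL p m).ker ↔ ∃ D, (x : Matrix ι ι ℤ_[p]) = 1 + p ^ m • D := by
  rw [MonoidHom.mem_ker, Units.ext_iff, ← mapMatrix_toZModPow_eq_iff, map_one]
  rfl

theorem ker_reduceGL_antitone :
    Antitone fun m => (reduceGL p m : GL ι ℤ_[p] →* _).ker := by
  intro m m' hmm' x hx
  obtain ⟨D, hD⟩ := mem_ker_reduceGL_iff.1 hx
  refine mem_ker_reduceGL_iff.2 ⟨p ^ (m' - m) • D, ?_⟩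
  rw [hD, smul_smul, ← pow_add, Nat.add_sub_cancel' hmm']

theorem tendsto_one_of_mem_ker_reduceGL {x : ℕ → GL ι ℤ_[p]}
    (hx : ∀ m, x m ∈ (reduceGL p m).ker) : Tendsto x atTop (𝓝 1) := by
  have hval {y : ℕ → GL ι ℤ_[p]} (hy : ∀ m, y m ∈ (reduceGL p m).ker) :
      Tendsto (fun m => (y m : Matrix ι ι ℤ_[p])) atTop (𝓝 1) := by
    choose D hD using fun m => mem_ker_reduceGL_iff.1 (hy m)
    have hp : ‖(p : ℤ_[p])‖ < 1 :=
      PadicInt.norm_p (p := p) ▸ inv_lt_one_of_one_lt₀ (mod_cast (Fact.out : p.Prime).one_lt)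
    have hpow : Tendsto (fun m => ‖(p : ℤ_[p])‖ ^ m) atTop (𝓝 0) :=
      tendsto_pow_atTop_nhds_zero_of_lt_one (norm_nonneg _) hp
    refine tendsto_pi_nhds.2 fun i => tendsto_pi_nhds.2 fun j => ?_
    rw [tendsto_iff_norm_sub_tendsto_zero]
    refine squeeze_zero (fun _ => norm_nonneg _) (fun m => ?_) hpow
    rw [hD, Matrix.add_apply, add_sub_cancel_left, Matrix.smul_apply, nsmul_eq_mul, norm_mul,
      Nat.cast_pow, norm_pow]
    exact mul_le_of_le_one_right (by positivity) (PadicInt.norm_le_one _)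
  rw [Units.isInducing_embedProduct.tendsto_nhds_iff]
  exact (hval hx).prodMk_nhds
    ((MulOpposite.continuous_op.tendsto 1).comp (hval fun m => inv_mem (hx m)))

theorem exists_ker_reduceGL_le_of_isOpen {G : Subgroup (GL ι ℤ_[p])}
    (hG : IsOpen (G : Set (GL ι ℤ_[p]))) : ∃ m, (reduceGL p m).ker ≤ G := by
  by_contra! hG'
  choose x hx hxG using fun m => SetLike.not_le_iff_exists.1 (hG' m)
  obtain ⟨m, hm⟩ :=
    ((tendsto_one_of_mem_ker_reduceGL hx).eventually_mem (hG.mem_nhds G.one_mem)).exists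
  exact hxG m hm

theorem exists_reduceGL_pow_prime_eq {m : ℕ} (hmp : m + 2 ≤ m * p) {x : GL ι ℤ_[p]}
    (hx : x ∈ (reduceGL p (m + 1)).ker) :
    ∃ y ∈ (reduceGL p m).ker, ∀ g, reduceGL p (m + 1) g = reduceGL p (m + 1) y →
      reduceGL p (m + 2) (g ^ p) = reduceGL p (m + 2) x := by
  have hm : m ≠ 0 := by rintro rfl; omega
  obtain ⟨A, hA⟩ := mem_ker_reduceGL_iff.1 hx
  have hunit : IsUnit (1 + p ^ m • A) := isUnit_of_isUnit_mapMatrix_toZModPow hm <| by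
    rw [(mapMatrix_toZModPow_eq_iff (N := 1)).2 ⟨A, rfl⟩, map_one]
    exact isUnit_one
  have hy : hunit.unit ∈ (reduceGL p m).ker := mem_ker_reduceGL_iff.2 ⟨A, rfl⟩
  refine ⟨hunit.unit, hy, fun g hg => ?_⟩
  have hgK : g ∈ (reduceGL p m).ker := (Subgroup.mul_mem_cancel_left _ (inv_mem hy)).1 <|
    ker_reduceGL_antitone m.le_succ ((MonoidHom.eq_iff _).1 hg)
  obtain ⟨D, hD⟩ := mem_ker_reduceGL_iff.1 hgK
  -- multiplying `p^m D ≡ p^m A [p^(m+1)]` by `p` avoids cancelling `p^m`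
  have hDA : (toZModPow (m + 2)).mapMatrix (p ^ (m + 1) • D) =
      (toZModPow (m + 2)).mapMatrix (p ^ (m + 1) • A) := by
    have h := congrArg Units.val hg
    rw [val_reduceGL, val_reduceGL, hD, IsUnit.unit_spec, map_add, map_add, add_right_inj] at h
    simpa only [smul_smul, ← pow_succ'] using mapMatrix_toZModPow_succ_nsmul_eq h
  ext1
  rw [val_reduceGL, val_reduceGL, Units.val_pow_eq_pow_val, hD, hA,
    mapMatrix_toZModPow_one_add_pow_prime hmp, map_add, map_add, hDA]

theorem ker_reduceGL_succ_le_sup {G : Subgroup (GL ι ℤ_[p])} {m : ℕ} (hmp : m + 2 ≤ m * p)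
    (h : (reduceGL p m).ker ≤ G ⊔ (reduceGL p (m + 1)).ker) :
    (reduceGL p (m + 1)).ker ≤ G ⊔ (reduceGL p (m + 2)).ker := by
  intro x hx
  obtain ⟨y, hy, hpow⟩ := exists_reduceGL_pow_prime_eq hmp hx
  rw [← Subgroup.comap_map_eq] at h ⊢
  obtain ⟨g, hg, hgy⟩ := h hy
  exact ⟨g ^ p, pow_mem hg p, hpow g hgy⟩

theorem ker_reduceGL_le_sup_of_le {G : Subgroup (GL ι ℤ_[p])} {n : ℕ} (hnp : n + 2 ≤ n * p)
    (h : (reduceGL p n).ker ≤ G ⊔ (reduceGL p (n + 1)).ker) {m : ℕ} (hnm : n ≤ m) :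
    (reduceGL p n).ker ≤ G ⊔ (reduceGL p m).ker := by
  have hstep : ∀ m, n ≤ m → (reduceGL p m).ker ≤ G ⊔ (reduceGL p (m + 1)).ker := by
    intro m hnm
    induction m, hnm using Nat.le_induction with
    | base => exact h
    | succ m hnm ih =>
      exact ker_reduceGL_succ_le_sup (by nlinarith [(Fact.out : p.Prime).two_le]) ih
  induction m, hnm using Nat.le_induction with
  | base => exact le_sup_right
  | succ m hnm ih => exact ih.trans (sup_le le_sup_left (hstep m hnm))

theorem index_map_reduceGL (G : Subgroup (GL ι ℤ_[p])) {m : ℕ} (hm : m ≠ 0) :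
    (G.map (reduceGL p m)).index = (G ⊔ (reduceGL p m).ker).index := by
  rw [Subgroup.index_map, (MonoidHom.range_eq_top.2 (reduceGL_surjective hm)),
    Subgroup.index_top, mul_one]

theorem ker_reduceGL_le_sup_succ_of_index_map_eq {G : Subgroup (GL ι ℤ_[p])} {n : ℕ}
    (hn : n ≠ 0)
    (h : (G.map (reduceGL p (n + 1))).index = (G.map (reduceGL p n)).index) :
    (reduceGL p n).ker ≤ G ⊔ (reduceGL p (n + 1)).ker := by
  have : NeZero (p ^ (n + 1)) := ⟨pow_ne_zero _ (Fact.out : p.Prime).ne_zero⟩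
  have : (G ⊔ (reduceGL p (n + 1)).ker).FiniteIndex :=
    ⟨index_map_reduceGL G n.succ_ne_zero ▸ Subgroup.index_ne_zero_of_finite⟩
  rw [index_map_reduceGL G hn, index_map_reduceGL G n.succ_ne_zero] at h
  by_contra hle
  have hlt : G ⊔ (reduceGL p (n + 1)).ker < G ⊔ (reduceGL p n).ker :=
    lt_of_le_not_ge (sup_le_sup_left (ker_reduceGL_antitone n.le_succ) G)
      fun h' => hle (le_sup_right.trans h')
  exact (Subgroup.index_strictAnti hlt).ne' h

end Reduction

/-- Sutherland–Zywina Lemma 3.7: if the index of the image of an open subgroup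
`G ≤ GL₂(ℤ_ℓ)` in `GL₂(ℤ/ℓ^{n+1})` equals its index in `GL₂(ℤ/ℓ^n)` (with
`n ≥ 1`, and `n ≠ 1` if `ℓ = 2`), then `[GL₂(ℤ_ℓ) : G]` equals this index. -/
theorem stmt_10 (ℓ : ℕ) [Fact ℓ.Prime]
    (G : Subgroup (GL (Fin 2) ℤ_[ℓ])) (hG : IsOpen (G : Set (GL (Fin 2) ℤ_[ℓ])))
    (n : ℕ) (hn : 1 ≤ n) (hn2 : ℓ = 2 → n ≠ 1)
    (h : (G.map (Units.map
        ((PadicInt.toZModPow (p := ℓ) (n + 1)).mapMatrix.toMonoidHom))).index =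
      (G.map (Units.map
        ((PadicInt.toZModPow (p := ℓ) n).mapMatrix.toMonoidHom))).index) :
    G.index = (G.map (Units.map
      ((PadicInt.toZModPow (p := ℓ) n).mapMatrix.toMonoidHom))).index := by
  have hn0 : n ≠ 0 := by omega
  have hnℓ : n + 2 ≤ n * ℓ := by
    rcases eq_or_ne ℓ 2 with rfl | hℓ
    · have := hn2 rfl; omega
    · have := (Fact.out : ℓ.Prime).two_le; nlinarith [show 3 ≤ ℓ by omega]
  obtain ⟨m, hm⟩ := exists_ker_reduceGL_le_of_isOpen hG
  have hker : (reduceGL ℓ n).ker ≤ G :=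
    (ker_reduceGL_le_sup_of_le hnℓ (ker_reduceGL_le_sup_succ_of_index_map_eq hn0 h)
      (le_max_left n m)).trans
      (sup_le le_rfl ((ker_reduceGL_antitone (le_max_right n m)).trans hm))
  exact (Subgroup.index_map_eq G (reduceGL_surjective hn0) hker).symm
end
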